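/- arXiv:1701.04444 — 4 statements merged into one kernel-verified Lean document; each statement's English description precedes it below -/
import Mathlib

section
/- The homomorphism density of any fixed finite graph H is Lipschitz-continuous (in particular continuous) with respect to the cut metric on graphons: |t_H(f) − t_H(g)| ≤ |E(H)| · d(f,g). -/
open MeasureTheory Real Set

noncomputable section

def I01 : Set ℝ := Set.Icc 0 1

def IsGraphon (g : ℝ → ℝ → ℝ) : Prop :=
  Measurable (Function.uncurry g) ∧ (∀ x y, g x y = g y x) ∧ ∀ x y, g x y ∈ Set.Icc (0:ℝ) 1

def cutDist (f g : ℝ → ℝ → ℝ) : ℝ :=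
  sSup {r : ℝ | ∃ S T : Set ℝ, MeasurableSet S ∧ MeasurableSet T ∧ S ⊆ I01 ∧ T ⊆ I01 ∧
    r = |∫ x in S, ∫ y in T, (f x y - g x y)|}

/-- The set of edges of `H`, each represented once as an ordered pair `(i,j)` with `i < j`. -/
def edgePairs {n : ℕ} (H : SimpleGraph (Fin n)) [DecidableRel H.Adj] : Finset (Fin n × Fin n) :=
  Finset.univ.filter fun p => p.1 < p.2 ∧ H.Adj p.1 p.2

/-- The homomorphism density of `H` in the graphon `g`:
`t_H(g) = ∫_{[0,1]^{V(H)}} ∏_{{i,j}∈E(H)} g(x_i,x_j) dx`. -/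
def homDensity {n : ℕ} (H : SimpleGraph (Fin n)) [DecidableRel H.Adj] (g : ℝ → ℝ → ℝ) : ℝ :=
  ∫ x in Set.univ.pi (fun _ : Fin n => I01), ∏ p ∈ edgePairs H, g (x p.1) (x p.2)

/-!
Write `t_H(f) - t_H(g)` as a telescoping sum over the edges of `H`: in the term of the edge
`{i, j}` the edges before it carry `f`, the edges after it carry `g`, and the edge itself carries
`f - g`. Freezing all coordinates other than `x_i, x_j`, every other edge misses `i` or `j`, so the
remaining weight factors as `a(x_i) b(x_j)` with `a, b` valued in `[0, 1]`. Writing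
`a(s) = |{u ∈ [0,1] : u < a(s)}|` (and likewise for `b`) exhibits `∫∫ a(s) b(t) (f - g)(s, t)` as an
average of integrals of `f - g` over rectangles `S × T`, each bounded by `d(f, g)`.
-/

open Function

theorem Measurable.comp_prodMk {α : Type*} [MeasurableSpace α] {h : ℝ → ℝ → ℝ}
    (hh : Measurable (uncurry h)) {u v : α → ℝ} (hu : Measurable u) (hv : Measurable v) :
    Measurable fun a => h (u a) (v a) :=
  hh.comp (hu.prodMk hv)

theorem abs_integral_le_of_forall_abs_le {α : Type*} [MeasurableSpace α] {μ : Measure α}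
    [IsProbabilityMeasure μ] {f : α → ℝ} {C : ℝ} (h : ∀ x, |f x| ≤ C) : |∫ x, f x ∂μ| ≤ C := by
  simpa using norm_integral_le_of_norm_le_const (μ := μ)
    (.of_forall fun x => (norm_eq_abs (f x)).trans_le (h x))

section Update

variable {ι : Type*} [Fintype ι] [DecidableEq ι] {α : ι → Type*} [∀ k, MeasurableSpace (α k)]
  (μ : ∀ k, Measure (α k)) [∀ k, IsProbabilityMeasure (μ k)]

theorem measurePreserving_update (i : ι) :
    MeasurePreserving (fun p : (∀ k, α k) × α i => update p.1 i p.2)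
      ((Measure.pi μ).prod (μ i)) (Measure.pi μ) := by
  refine ⟨by fun_prop, (Measure.pi_eq fun s hs => ?_).symm⟩
  have hpre : (fun p : (∀ k, α k) × α i => update p.1 i p.2) ⁻¹' univ.pi s
      = univ.pi (update s i univ) ×ˢ s i := by
    ext ⟨x, a⟩
    simp only [mem_preimage, mem_pi, mem_univ, true_implies, mem_prod]
    rw [forall_update_iff (p := fun k y => y ∈ s k), forall_update_iff (p := fun k S => x k ∈ S)]
    simp only [mem_univ, true_and]
    exact and_comm
  rw [Measure.map_apply (by fun_prop) (.univ_pi hs), hpre, Measure.prod_prod, Measure.pi_pi,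
    Fintype.prod_eq_mul_prod_compl i, Fintype.prod_eq_mul_prod_compl i]
  simp only [update_self, measure_univ, one_mul, mul_comm]
  congr 1
  refine Finset.prod_congr rfl fun k hk => ?_
  rw [update_of_ne (by simpa using hk)]

theorem integral_pi_eq_integral_update_update {Φ : (∀ k, α k) → ℝ}
    (hΦ : Integrable Φ (Measure.pi μ)) (i j : ι) :
    ∫ x, Φ x ∂(Measure.pi μ) =
      ∫ x, ∫ st, Φ (update (update x i st.1) j st.2) ∂((μ i).prod (μ j)) ∂(Measure.pi μ) := by
  have hT : MeasurePreserving
      (fun p : (∀ k, α k) × (α i × α j) => update (update p.1 i p.2.1) j p.2.2)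
      ((Measure.pi μ).prod ((μ i).prod (μ j))) (Measure.pi μ) :=
    (measurePreserving_update μ j).comp <|
      ((measurePreserving_update μ i).prod (.id (μ j))).comp
        (measurePreserving_prodAssoc _ _ _).symm
  have hmap := integral_map hT.measurable.aemeasurable (hT.map_eq ▸ hΦ.aestronglyMeasurable)
  rw [hT.map_eq] at hmap
  exact hmap.trans (integral_prod _ (hT.integrable_comp_of_integrable hΦ))

end Update

def unitVolume : Measure ℝ := volume.restrict I01

instance : IsProbabilityMeasure unitVolume :=
  ⟨by simp [unitVolume, I01]⟩

theorem unitVolume_real_Iio {c : ℝ} (hc : c ∈ Icc (0 : ℝ) 1) : unitVolume.real (Iio c) = c := by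
  have : Iio c ∩ I01 = Ico 0 c := by
    ext x
    simp only [I01, mem_inter_iff, mem_Iio, mem_Icc, mem_Ico]
    exact ⟨fun h => ⟨h.2.1, h.1⟩, fun h => ⟨h.2, h.1, h.2.le.trans hc.2⟩⟩
  rw [unitVolume, measureReal_restrict_apply measurableSet_Iio, this,
    Real.volume_real_Ico_of_le hc.1, sub_zero]

section ProductWeight

variable {α β : Type*} [MeasurableSpace α] [MeasurableSpace β]

def IsProductWeight (φ : α → β → ℝ) : Prop :=
  ∃ a : α → ℝ, ∃ b : β → ℝ, Measurable a ∧ Measurable b ∧ (∀ s, a s ∈ Icc (0 : ℝ) 1) ∧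
    (∀ t, b t ∈ Icc (0 : ℝ) 1) ∧ ∀ s t, φ s t = a s * b t

theorem IsProductWeight.of_left {φ : α → β → ℝ} {a : α → ℝ} (ha : Measurable a)
    (ha01 : ∀ s, a s ∈ Icc (0 : ℝ) 1) (hφ : ∀ s t, φ s t = a s) : IsProductWeight φ :=
  ⟨a, 1, ha, measurable_const, ha01, fun _ => ⟨zero_le_one, le_rfl⟩, by simpa using hφ⟩

theorem IsProductWeight.of_right {φ : α → β → ℝ} {b : β → ℝ} (hb : Measurable b)
    (hb01 : ∀ t, b t ∈ Icc (0 : ℝ) 1) (hφ : ∀ s t, φ s t = b t) : IsProductWeight φ :=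
  ⟨1, b, measurable_const, hb, fun _ => ⟨zero_le_one, le_rfl⟩, hb01, by simpa using hφ⟩

theorem IsProductWeight.prod {κ : Type*} {E : Finset κ} {φ : κ → α → β → ℝ}
    (h : ∀ k ∈ E, IsProductWeight (φ k)) : IsProductWeight fun s t => ∏ k ∈ E, φ k s t := by
  choose! a b ha hb ha01 hb01 hab using h
  refine ⟨fun s => ∏ k ∈ E, a k s, fun t => ∏ k ∈ E, b k t,
    Finset.measurable_prod _ ha, Finset.measurable_prod _ hb,
    fun s => unitInterval.prod_mem fun k hk => ha01 k hk s,
    fun t => unitInterval.prod_mem fun k hk => hb01 k hk t, fun s t => ?_⟩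
  rw [← Finset.prod_mul_distrib]
  exact Finset.prod_congr rfl fun k hk => hab k hk s t

theorem IsProductWeight.abs_integral_mul_le {μ : Measure α} {ν : Measure β} [SFinite μ]
    [SFinite ν] {φ : α → β → ℝ} (hφ : IsProductWeight φ) {F : α × β → ℝ}
    (hF : Integrable F (μ.prod ν)) {C : ℝ}
    (hC : ∀ S T, MeasurableSet S → MeasurableSet T → |∫ p in S ×ˢ T, F p ∂(μ.prod ν)| ≤ C) :
    |∫ p, F p * φ p.1 p.2 ∂(μ.prod ν)| ≤ C := by
  obtain ⟨a, b, ha, hb, ha01, hb01, hφab⟩ := hφ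
  set W : Set ((α × β) × (ℝ × ℝ)) := {q | q.2.1 < a q.1.1 ∧ q.2.2 < b q.1.2}
  have hW : MeasurableSet W :=
    (measurableSet_lt measurable_snd.fst (ha.comp measurable_fst.fst)).inter
      (measurableSet_lt measurable_snd.snd (hb.comp measurable_fst.snd))
  have hG : Integrable (W.indicator fun q => F q.1)
      ((μ.prod ν).prod (unitVolume.prod unitVolume)) :=
    (hF.comp_fst _).indicator hW
  have layer : ∀ p : α × β, F p * φ p.1 p.2 =
      ∫ r, W.indicator (fun q => F q.1) (p, r) ∂(unitVolume.prod unitVolume) := by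
    intro p
    have hslice : (fun r => W.indicator (fun q => F q.1) (p, r)) =
        (Iio (a p.1) ×ˢ Iio (b p.2)).indicator fun _ => F p := by
      ext r
      simp only [indicator_apply, W, mem_ofPred_eq, mem_prod, mem_Iio]
    rw [hslice, integral_indicator_const _ (measurableSet_Iio.prod measurableSet_Iio),
      measureReal_prod_prod, unitVolume_real_Iio (ha01 _), unitVolume_real_Iio (hb01 _), hφab,
      smul_eq_mul, mul_comm]
  have rect : ∀ r : ℝ × ℝ, ∫ p, W.indicator (fun q => F q.1) (p, r) ∂(μ.prod ν) =
      ∫ p in {s | r.1 < a s} ×ˢ {t | r.2 < b t}, F p ∂(μ.prod ν) := by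
    intro r
    rw [← integral_indicator ((measurableSet_lt measurable_const ha).prod
      (measurableSet_lt measurable_const hb))]
    rfl
  rw [integral_congr_ae (.of_forall layer),
    integral_integral_swap (f := fun p r => W.indicator (fun q => F q.1) (p, r)) hG]
  refine abs_integral_le_of_forall_abs_le fun r => ?_
  rw [rect]
  exact hC _ _ (measurableSet_lt measurable_const ha) (measurableSet_lt measurable_const hb)

end ProductWeight

theorem Finset.prod_sub_prod_eq_sum_mul_prod_erase {ι κ R : Type*} [DecidableEq ι] [CommRing R]
    [LinearOrder κ] {e : ι → κ} (he : Injective e) (s : Finset ι) (F G : ι → R) :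
    ∏ i ∈ s, F i - ∏ i ∈ s, G i =
      ∑ i ∈ s, (F i - G i) * ∏ j ∈ s.erase i, if e j < e i then F j else G j := by
  let _ : LinearOrder ι := LinearOrder.lift' e he
  have h := s.prod_add_ordered G (F - G)
  simp only [Pi.sub_apply, add_sub_cancel] at h
  rw [h, add_sub_cancel_left]
  refine Finset.sum_congr rfl fun i _ => ?_
  have hlt : {j ∈ s.erase i | e j < e i} = {j ∈ s | j < i} := by
    ext j
    simp only [mem_filter, mem_erase]
    exact ⟨fun h => ⟨h.1.2, h.2⟩, fun h => ⟨⟨ne_of_lt h.2, h.1⟩, h.2⟩⟩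
  have hgt : {j ∈ s.erase i | ¬e j < e i} = {j ∈ s | i < j} := by
    ext j
    simp only [mem_filter, mem_erase]
    exact ⟨fun h => ⟨h.1.2, lt_of_le_of_ne (not_lt.1 h.2) h.1.1.symm⟩,
      fun h => ⟨⟨ne_of_gt h.2, h.1⟩, not_lt.2 h.2.le⟩⟩
  rw [prod_ite, hlt, hgt, mul_assoc]

theorem homDensity_eq_integral_pi {n : ℕ} (H : SimpleGraph (Fin n)) [DecidableRel H.Adj]
    (g : ℝ → ℝ → ℝ) :
    homDensity H g =
      ∫ x, ∏ p ∈ edgePairs H, g (x p.1) (x p.2) ∂(Measure.pi fun _ => unitVolume) := by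
  rw [homDensity, volume_pi, Measure.restrict_pi_pi]
  rfl

theorem mem_edgePairs {n : ℕ} {H : SimpleGraph (Fin n)} [DecidableRel H.Adj]
    {p : Fin n × Fin n} : p ∈ edgePairs H ↔ p.1 < p.2 ∧ H.Adj p.1 p.2 := by
  simp [edgePairs]

theorem avoids_of_mem_edgePairs_erase {n : ℕ} {H : SimpleGraph (Fin n)} [DecidableRel H.Adj]
    {p q : Fin n × Fin n} (hp : p ∈ edgePairs H) (hq : q ∈ (edgePairs H).erase p) :
    (q.1 ≠ p.1 ∧ q.2 ≠ p.1) ∨ (q.1 ≠ p.2 ∧ q.2 ≠ p.2) := by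
  obtain ⟨hqp, hq⟩ := Finset.mem_erase.1 hq
  have := (mem_edgePairs.1 hp).1
  have := (mem_edgePairs.1 hq).1
  grind [Prod.ext_iff]

theorem integrable_prod_apply_pair {ι : Type*} {E : Finset (ι × ι)} {h : ι × ι → ℝ → ℝ → ℝ}
    (hhm : ∀ q ∈ E, Measurable (uncurry (h q))) (hh01 : ∀ q ∈ E, ∀ s t, h q s t ∈ Icc (0 : ℝ) 1)
    (μ : Measure (ι → ℝ)) [IsFiniteMeasure μ] :
    Integrable (fun x => ∏ q ∈ E, h q (x q.1) (x q.2)) μ := by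
  have hm : Measurable fun x : ι → ℝ => ∏ q ∈ E, h q (x q.1) (x q.2) :=
    Finset.measurable_prod (f := fun q (x : ι → ℝ) => h q (x q.1) (x q.2)) _ fun q hq =>
      (hhm q hq).comp_prodMk (measurable_pi_apply q.1) (measurable_pi_apply q.2)
  refine .of_bound hm.aestronglyMeasurable 1 (.of_forall fun x => ?_)
  have h01 := unitInterval.prod_mem fun q hq => hh01 q hq (x q.1) (x q.2)
  rw [norm_eq_abs, abs_of_nonneg h01.1]
  exact h01.2

theorem abs_setIntegral_le_one_of_subset_I01 {S : Set ℝ} (hS : S ⊆ I01) {G : ℝ → ℝ}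
    (hG : ∀ x, |G x| ≤ 1) : |∫ x in S, G x| ≤ 1 := by
  have hI01 : volume I01 < ⊤ := measure_Icc_lt_top
  have hvol : volume.real S ≤ 1 := by
    simpa [I01] using measureReal_mono hS hI01.ne
  calc |∫ x in S, G x| ≤ 1 * volume.real S := by
        simpa only [Real.norm_eq_abs] using norm_setIntegral_le_of_norm_le_const
          ((measure_mono hS).trans_lt hI01) fun x _ => (Real.norm_eq_abs (G x)).trans_le (hG x)
    _ ≤ 1 := by linarith

theorem isProductWeight_prod_update_update {ι : Type*} [DecidableEq ι] {E : Finset (ι × ι)}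
    {h : ι × ι → ℝ → ℝ → ℝ} (hhm : ∀ q ∈ E, Measurable (uncurry (h q)))
    (hh01 : ∀ q ∈ E, ∀ s t, h q s t ∈ Icc (0 : ℝ) 1) {i j : ι}
    (hE : ∀ q ∈ E, (q.1 ≠ i ∧ q.2 ≠ i) ∨ (q.1 ≠ j ∧ q.2 ≠ j)) (x : ι → ℝ) :
    IsProductWeight fun s t =>
      ∏ q ∈ E, h q (update (update x i s) j t q.1) (update (update x i s) j t q.2) := by
  have hleft : ∀ k, k ≠ j → ∀ s t, update (update x i s) j t k = update (update x i s) j 0 k :=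
    fun k hk s t => by simp [hk]
  have hright : ∀ k, k ≠ i → ∀ s t, update (update x i s) j t k = update (update x i 0) j t k :=
    fun k hk s t => by by_cases hkj : k = j <;> simp [hk, hkj]
  refine IsProductWeight.prod fun q hq => (hE q hq).elim (fun hqi => ?_) (fun hqj => ?_)
  · refine .of_right (b := fun t => h q (update (update x i 0) j t q.1)
      (update (update x i 0) j t q.2)) ((hhm q hq).comp_prodMk (by fun_prop) (by fun_prop))
      (fun t => hh01 q hq _ _) fun s t => ?_
    rw [hright _ hqi.1, hright _ hqi.2]
  · refine .of_left (a := fun s => h q (update (update x i s) j 0 q.1)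
      (update (update x i s) j 0 q.2)) ((hhm q hq).comp_prodMk (by fun_prop) (by fun_prop))
      (fun s => hh01 q hq _ _) fun s t => ?_
    rw [hleft _ hqj.1, hleft _ hqj.2]

namespace IsGraphon

variable {f g : ℝ → ℝ → ℝ}

theorem abs_sub_le_one (hf : IsGraphon f) (hg : IsGraphon g) (x y : ℝ) :
    |f x y - g x y| ≤ 1 := by
  have hfxy := hf.2.2 x y
  have hgxy := hg.2.2 x y
  rw [abs_sub_le_iff]
  constructor <;> linarith [hfxy.1, hfxy.2, hgxy.1, hgxy.2]

theorem integrable_sub (hf : IsGraphon f) (hg : IsGraphon g) (μ : Measure (ℝ × ℝ))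
    [IsFiniteMeasure μ] : Integrable (fun p => f p.1 p.2 - g p.1 p.2) μ :=
  .of_bound (hf.1.sub hg.1).aestronglyMeasurable 1
    (.of_forall fun p => (norm_eq_abs _).trans_le (hf.abs_sub_le_one hg p.1 p.2))

theorem abs_setIntegral_setIntegral_le_cutDist (hf : IsGraphon f) (hg : IsGraphon g)
    {S T : Set ℝ} (hS : MeasurableSet S) (hT : MeasurableSet T) (hSI : S ⊆ I01) (hTI : T ⊆ I01) :
    |∫ x in S, ∫ y in T, (f x y - g x y)| ≤ cutDist f g := by
  refine le_csSup ⟨1, ?_⟩ ⟨S, T, hS, hT, hSI, hTI, rfl⟩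
  rintro r ⟨S', T', -, -, hS'I, hT'I, rfl⟩
  exact abs_setIntegral_le_one_of_subset_I01 hS'I fun x =>
    abs_setIntegral_le_one_of_subset_I01 hT'I fun y => hf.abs_sub_le_one hg x y

theorem abs_setIntegral_prod_le_cutDist (hf : IsGraphon f) (hg : IsGraphon g)
    {S T : Set ℝ} (hS : MeasurableSet S) (hT : MeasurableSet T) :
    |∫ p in S ×ˢ T, (f p.1 p.2 - g p.1 p.2) ∂(unitVolume.prod unitVolume)| ≤ cutDist f g := by
  have hint := (hf.integrable_sub hg (unitVolume.prod unitVolume)).restrict (s := S ×ˢ T)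
  rw [← Measure.prod_restrict, unitVolume, Measure.restrict_restrict hS,
    Measure.restrict_restrict hT] at hint ⊢
  rw [integral_prod _ hint]
  exact hf.abs_setIntegral_setIntegral_le_cutDist hg (hS.inter measurableSet_Icc)
    (hT.inter measurableSet_Icc) inter_subset_right inter_subset_right

theorem integrable_sub_mul_prod (hf : IsGraphon f) (hg : IsGraphon g) {ι : Type*}
    {E : Finset (ι × ι)} {h : ι × ι → ℝ → ℝ → ℝ} (hhm : ∀ q ∈ E, Measurable (uncurry (h q)))
    (hh01 : ∀ q ∈ E, ∀ s t, h q s t ∈ Icc (0 : ℝ) 1) (i j : ι) (μ : Measure (ι → ℝ))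
    [IsFiniteMeasure μ] :
    Integrable (fun x => (f (x i) (x j) - g (x i) (x j)) * ∏ q ∈ E, h q (x q.1) (x q.2)) μ :=
  (integrable_prod_apply_pair hhm hh01 μ).bdd_mul
    ((hf.1.comp_prodMk (measurable_pi_apply i) (measurable_pi_apply j)).sub
      (hg.1.comp_prodMk (measurable_pi_apply i) (measurable_pi_apply j))).aestronglyMeasurable
    (.of_forall fun _ => (norm_eq_abs _).trans_le (hf.abs_sub_le_one hg _ _))

theorem abs_integral_sub_mul_prod_le_cutDist (hf : IsGraphon f) (hg : IsGraphon g) {ι : Type*}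
    [Fintype ι] [DecidableEq ι] {E : Finset (ι × ι)} {h : ι × ι → ℝ → ℝ → ℝ}
    (hhm : ∀ q ∈ E, Measurable (uncurry (h q))) (hh01 : ∀ q ∈ E, ∀ s t, h q s t ∈ Icc (0 : ℝ) 1)
    {i j : ι} (hij : i ≠ j) (hE : ∀ q ∈ E, (q.1 ≠ i ∧ q.2 ≠ i) ∨ (q.1 ≠ j ∧ q.2 ≠ j)) :
    |∫ x, (f (x i) (x j) - g (x i) (x j)) * ∏ q ∈ E, h q (x q.1) (x q.2)
        ∂(Measure.pi fun _ => unitVolume)| ≤ cutDist f g := by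
  rw [integral_pi_eq_integral_update_update _ (hf.integrable_sub_mul_prod hg hhm hh01 i j _) i j]
  refine abs_integral_le_of_forall_abs_le fun x => ?_
  simp only [update_self, update_of_ne hij]
  exact (isProductWeight_prod_update_update hhm hh01 hE x).abs_integral_mul_le
    (hf.integrable_sub hg _) fun S T hS hT => hf.abs_setIntegral_prod_le_cutDist hg hS hT

end IsGraphon

theorem homDensity_lipschitz_cutDist {n : ℕ} (H : SimpleGraph (Fin n)) [DecidableRel H.Adj]
    (f g : ℝ → ℝ → ℝ) (hf : IsGraphon f) (hg : IsGraphon g) :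
    |homDensity H f - homDensity H g| ≤ ((edgePairs H).card : ℝ) * cutDist f g := by
  let w : Fin n × Fin n → Fin n × Fin n → ℝ → ℝ → ℝ := fun p q =>
    if toLex q < toLex p then f else g
  have hwm : ∀ p q, Measurable (uncurry (w p q)) := fun p q => by
    simp only [w]
    split_ifs
    exacts [hf.1, hg.1]
  have hw01 : ∀ p q s t, w p q s t ∈ Icc (0 : ℝ) 1 := fun p q s t => by
    simp only [w]
    split_ifs
    exacts [hf.2.2 s t, hg.2.2 s t]
  have htelescope : homDensity H f - homDensity H g = ∑ p ∈ edgePairs H,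
      ∫ x, (f (x p.1) (x p.2) - g (x p.1) (x p.2)) *
        ∏ q ∈ (edgePairs H).erase p, w p q (x q.1) (x q.2) ∂(Measure.pi fun _ => unitVolume) := by
    rw [homDensity_eq_integral_pi, homDensity_eq_integral_pi,
      ← integral_sub (integrable_prod_apply_pair (fun q _ => hf.1) (fun q _ => hf.2.2) _)
        (integrable_prod_apply_pair (fun q _ => hg.1) (fun q _ => hg.2.2) _),
      ← integral_finsetSum _ fun p _ => hf.integrable_sub_mul_prod hg (fun q _ => hwm p q)
        (fun q _ => hw01 p q) p.1 p.2 _]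
    refine integral_congr_ae (.of_forall fun x => ?_)
    simp only [w, ite_apply]
    exact Finset.prod_sub_prod_eq_sum_mul_prod_erase (toLex (α := Fin n × Fin n)).injective _ _ _
  rw [htelescope]
  calc _ ≤ ∑ p ∈ edgePairs H, |∫ x, (f (x p.1) (x p.2) - g (x p.1) (x p.2)) *
          ∏ q ∈ (edgePairs H).erase p, w p q (x q.1) (x q.2) ∂(Measure.pi fun _ => unitVolume)| :=
        Finset.abs_sum_le_sum_abs _ _
    _ ≤ ∑ _p ∈ edgePairs H, cutDist f g := Finset.sum_le_sum fun p hp =>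
        hf.abs_integral_sub_mul_prod_le_cutDist hg (fun q _ => hwm p q) (fun q _ => hw01 p q)
          (mem_edgePairs.1 hp).1.ne fun q hq => avoids_of_mem_edgePairs_erase hp hq
    _ = _ := by rw [Finset.sum_const, nsmul_eq_mul]
end
end

section
/- For the A(n,0) graphon family, if ε and τ satisfy τ ≤ ε³, then setting a = ε − (n−1)·((ε³−τ)/(n−1))^{1/3} and b = ε + ((ε³−τ)/(n−1))^{1/3} yields ε = (a + (n−1)b)/n and a³/n² + 3ab²(n−1)/n² + b³(n−1)(n−2)/n² = τ, i.e., these parameter values achieve the prescribed edge and triangle densities, provided a, b ∈ [0,1]. -/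
open Real

theorem A_n_0_parameters_achieve_densities (n : ℕ) (hn : 2 ≤ n)
    (ε τ : ℝ) (hε : ε ∈ Set.Icc (0:ℝ) 1) (hτ : 0 ≤ τ) (hττ : τ ≤ ε ^ 3)
    (a b : ℝ)
    (ha : a = ε - ((n : ℝ) - 1) * (((ε ^ 3 - τ) / ((n : ℝ) - 1)) ^ ((1:ℝ)/3)))
    (hb : b = ε + ((ε ^ 3 - τ) / ((n : ℝ) - 1)) ^ ((1:ℝ)/3))
    (ha' : a ∈ Set.Icc (0:ℝ) 1) (hb' : b ∈ Set.Icc (0:ℝ) 1) :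
    ε = (a + ((n : ℝ) - 1) * b) / n ∧
    a ^ 3 / (n : ℝ) ^ 2 + 3 * a * b ^ 2 * ((n : ℝ) - 1) / (n : ℝ) ^ 2
      + b ^ 3 * ((n : ℝ) - 1) * ((n : ℝ) - 2) / (n : ℝ) ^ 2 = τ := by
  have hn1 : (1:ℝ) ≤ (n:ℝ) - 1 := by
    have : (2:ℝ) ≤ (n:ℝ) := by exact_mod_cast hn
    linarith
  have hn0 : ((n:ℝ) - 1) ≠ 0 := by linarith
  have hnn : (n:ℝ) ≠ 0 := by
    have : (2:ℝ) ≤ (n:ℝ) := by exact_mod_cast hn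
    linarith
  set x := (ε ^ 3 - τ) / ((n : ℝ) - 1) with hx
  have hx0 : 0 ≤ x := div_nonneg (by linarith) (by linarith)
  set c := x ^ ((1:ℝ)/3) with hc
  have hc3 : c ^ 3 = x := by
    rw [hc, ← Real.rpow_natCast (x ^ ((1:ℝ)/3)) 3, ← Real.rpow_mul hx0]
    norm_num
  constructor
  · rw [ha, hb]; field_simp; ring
  · have key : a ^ 3 + 3 * a * b ^ 2 * ((n:ℝ) - 1) + b ^ 3 * ((n:ℝ) - 1) * ((n:ℝ) - 2)
        = (n:ℝ) ^ 2 * τ := by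
      have hcx : ((n:ℝ) - 1) * c ^ 3 = ε ^ 3 - τ := by
        rw [hc3, hx]; field_simp
      rw [ha, hb]
      nlinarith [hcx, sq_nonneg ((n:ℝ))]
    field_simp
    linarith [key]
end

section
/- If a B(2,1) graphon with parameters (a₊,a₋,b,c,d), all in (0,1), c ∈ (0,1), satisfies the Euler–Lagrange equation S₀'(g(x,y)) = α + 3β∫₀¹ g(x,z)g(y,z)dz for a.e. (x,y) with β > 0, then a₊ > a₋, and β = −2S₀''(u)/(3c(a₊−a₋)) for some u ∈ (a₋, a₊); hence β ≥ 8/(3c(a₊−a₋)). -/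
/-! Evaluating the Euler–Lagrange equation at two points of the first small pode, once against
itself and once against the second small pode, and subtracting kills `α` and the large-pode
contribution: `S₀'(a₋) − S₀'(a₊) = (3βc/2)(a₊ − a₋)²`. The right side is positive and `S₀'` is
strictly decreasing, so `a₋ < a₊`; the mean value theorem turns the difference quotient into
`S₀''(u)`, and `−S₀''(u) = 1/(u(1 − u)) ≥ 4` gives the bound. -/

open MeasureTheory Real Set

noncomputable section

def S0' (u : ℝ) : ℝ := Real.log ((1 - u) / u)

def S0'' (u : ℝ) : ℝ := -1 / (u * (1 - u))

def pode3 (c x : ℝ) : ℕ := if x < c / 2 then 0 else if x < c then 1 else 2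

def tripodal (aplus aminus b c d : ℝ) (x y : ℝ) : ℝ :=
  if pode3 c x = 2 ∧ pode3 c y = 2 then b
  else if pode3 c x = 2 ∨ pode3 c y = 2 then d
  else if pode3 c x = pode3 c y then aminus
  else aplus

def SatisfiesEulerLagrange (g : ℝ → ℝ → ℝ) (α β : ℝ) : Prop :=
  ∀ x ∈ I01, ∀ y ∈ I01, S0' (g x y) = α + 3 * β * ∫ z in I01, g x z * g y z

def threeStep (s t p q r z : ℝ) : ℝ := if z < s then p else if z < t then q else r

section IteIntegral

variable {a s b : ℝ} {g : ℝ → ℝ}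

theorem integrableOn_Icc_ite_lt (has : a ≤ s) (hsb : s ≤ b) (p : ℝ)
    (hg : IntegrableOn g (Icc s b)) :
    IntegrableOn (fun z => if z < s then p else g z) (Icc a b) := by
  rw [← Ico_union_Icc_eq_Icc has hsb]
  exact ((integrableOn_const (C := p) measure_Ico_lt_top.ne).congr_fun
    (fun z hz => (if_pos hz.2).symm) measurableSet_Ico).union
    (hg.congr_fun (fun z hz => (if_neg (not_lt.2 hz.1)).symm) measurableSet_Icc)

theorem setIntegral_Icc_ite_lt (has : a ≤ s) (hsb : s ≤ b) (p : ℝ)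
    (hg : IntegrableOn g (Icc s b)) :
    ∫ z in Icc a b, (if z < s then p else g z) = (s - a) * p + ∫ z in Icc s b, g z := by
  have hint := integrableOn_Icc_ite_lt has hsb p hg
  rw [← Ico_union_Icc_eq_Icc has hsb] at hint ⊢
  have hdisj : Disjoint (Ico a s) (Icc s b) :=
    Set.disjoint_left.2 fun z hz hz' => not_le.2 hz.2 hz'.1
  rw [setIntegral_union hdisj measurableSet_Icc (hint.mono_set subset_union_left)
      (hint.mono_set subset_union_right),
    setIntegral_congr_fun measurableSet_Ico (fun z hz => if_pos hz.2),
    setIntegral_congr_fun measurableSet_Icc (fun z hz => if_neg (not_lt.2 hz.1)),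
    setIntegral_const, Real.volume_real_Ico_of_le has, smul_eq_mul]

end IteIntegral

theorem threeStep_mul_threeStep (s t p q r p' q' r' z : ℝ) :
    threeStep s t p q r z * threeStep s t p' q' r' z =
      threeStep s t (p * p') (q * q') (r * r') z := by
  unfold threeStep
  split_ifs <;> rfl

theorem setIntegral_Icc_threeStep {s t : ℝ} (hs : 0 ≤ s) (hst : s ≤ t) (ht : t ≤ 1)
    (p q r : ℝ) :
    ∫ z in Icc 0 1, threeStep s t p q r z = s * p + (t - s) * q + (1 - t) * r := by
  have hr : IntegrableOn (fun _ => r) (Icc t 1) := integrableOn_const measure_Icc_lt_top.ne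
  unfold threeStep
  rw [setIntegral_Icc_ite_lt hs (hst.trans ht) p (integrableOn_Icc_ite_lt hst ht q hr),
    setIntegral_Icc_ite_lt hst ht q hr, setIntegral_const, Real.volume_real_Icc_of_le ht,
    smul_eq_mul]
  ring

section Tripodal

variable {aplus aminus b c d x : ℝ}

theorem tripodal_eq_threeStep_of_pode3_eq_zero (hx : pode3 c x = 0) :
    tripodal aplus aminus b c d x = threeStep (c / 2) c aminus aplus d := by
  ext z
  simp only [tripodal, threeStep, hx]
  unfold pode3
  split_ifs <;> simp_all

theorem tripodal_eq_threeStep_of_pode3_eq_one (hx : pode3 c x = 1) :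
    tripodal aplus aminus b c d x = threeStep (c / 2) c aplus aminus d := by
  ext z
  simp only [tripodal, threeStep, hx]
  unfold pode3
  split_ifs <;> simp_all

theorem SatisfiesEulerLagrange.S0'_sub_S0'_tripodal {α β : ℝ} (hc0 : 0 < c) (hc1 : c ≤ 1)
    (hEL : SatisfiesEulerLagrange (tripodal aplus aminus b c d) α β) :
    S0' aminus - S0' aplus = 3 * β * c / 2 * (aplus - aminus) ^ 2 := by
  have hp0 : pode3 c 0 = 0 := by simp [pode3, hc0]
  have hp1 : pode3 c (c / 2) = 1 := by simp [pode3, hc0]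
  have h0 : (0 : ℝ) ∈ I01 := ⟨le_rfl, zero_le_one⟩
  have h1 : c / 2 ∈ I01 := ⟨by linarith, by linarith⟩
  have hsame := hEL 0 h0 0 h0
  have hcross := hEL 0 h0 (c / 2) h1
  simp only [tripodal_eq_threeStep_of_pode3_eq_zero hp0,
    tripodal_eq_threeStep_of_pode3_eq_one hp1, threeStep_mul_threeStep, I01,
    setIntegral_Icc_threeStep (half_pos hc0).le (half_le_self hc0.le) hc1] at hsame hcross
  simp only [threeStep, hc0, half_pos, half_lt_self, lt_self_iff_false, if_true, if_false]
    at hsame hcross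
  rw [hsame, hcross]
  ring

end Tripodal

section Entropy

variable {u : ℝ}

theorem hasDerivAt_S0' (hu : u ∈ Ioo 0 1) : HasDerivAt S0' (S0'' u) u := by
  obtain ⟨hu0, hu1⟩ := hu
  have hq : HasDerivAt (fun v : ℝ => (1 - v) / v) ((-1 * u - (1 - u) * 1) / u ^ 2) u :=
    ((hasDerivAt_id u).const_sub 1).div (hasDerivAt_id u) hu0.ne'
  refine (hq.log (div_pos (sub_pos.2 hu1) hu0).ne').congr_deriv ?_
  unfold S0''
  field_simp [sub_ne_zero.2 hu1.ne']
  ring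

theorem strictAntiOn_S0' : StrictAntiOn S0' (Ioo 0 1) := by
  rintro u ⟨hu0, hu1⟩ v ⟨hv0, hv1⟩ huv
  apply Real.log_lt_log (div_pos (by linarith) hv0)
  rw [div_lt_div_iff₀ hv0 hu0]
  nlinarith

theorem eight_le_neg_two_mul_S0'' (hu : u ∈ Ioo 0 1) : 8 ≤ -2 * S0'' u := by
  obtain ⟨hu0, hu1⟩ := hu
  have hpos : 0 < u * (1 - u) := mul_pos hu0 (sub_pos.2 hu1)
  rw [S0'', show -2 * (-1 / (u * (1 - u))) = 2 / (u * (1 - u)) by ring, le_div_iff₀ hpos]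
  nlinarith [sq_nonneg (2 * u - 1)]

theorem exists_S0''_eq_slope {a a' : ℝ} (ha : 0 < a) (haa' : a < a') (ha' : a' < 1) :
    ∃ u ∈ Ioo a a', S0'' u = (S0' a' - S0' a) / (a' - a) := by
  have hsub : Icc a a' ⊆ Ioo 0 1 := fun v hv => ⟨ha.trans_le hv.1, hv.2.trans_lt ha'⟩
  exact exists_hasDerivAt_eq_slope S0' S0'' haa'
    (fun v hv => (hasDerivAt_S0' (hsub hv)).continuousAt.continuousWithinAt)
    (fun v hv => hasDerivAt_S0' (hsub (Ioo_subset_Icc_self hv)))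

end Entropy

theorem euler_lagrange_forces_divergence_general (aplus aminus b c d α β : ℝ)
    (hap : aplus ∈ Set.Ioo (0:ℝ) 1) (ham : aminus ∈ Set.Ioo (0:ℝ) 1)
    (hc : c ∈ Set.Ioo (0:ℝ) 1) (hβ : 0 < β)
    (hne : aplus ≠ aminus)
    (hEL : ∀ x ∈ I01, ∀ y ∈ I01,
      S0' (tripodal aplus aminus b c d x y)
        = α + 3 * β * ∫ z in I01,
            tripodal aplus aminus b c d x z * tripodal aplus aminus b c d y z) :
    aminus < aplus ∧
    (∃ u ∈ Set.Ioo aminus aplus, β = -2 * S0'' u / (3 * c * (aplus - aminus))) ∧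
    β ≥ 8 / (3 * c * (aplus - aminus)) := by
  obtain ⟨hc0, hc1⟩ := hc
  have hdiff := SatisfiesEulerLagrange.S0'_sub_S0'_tripodal hc0 hc1.le hEL
  have hgap : 0 < 3 * β * c / 2 * (aplus - aminus) ^ 2 := by
    have := sub_ne_zero.2 hne
    positivity
  have hlt : aminus < aplus := (StrictAntiOn.lt_iff_gt strictAntiOn_S0' hap ham).1 (by linarith)
  have hwidth : 0 < aplus - aminus := sub_pos.2 hlt
  obtain ⟨u, hu, hslope⟩ := exists_S0''_eq_slope ham.1 hlt hap.2
  have hβeq : β = -2 * S0'' u / (3 * c * (aplus - aminus)) := by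
    rw [hslope, show S0' aplus - S0' aminus = -(3 * β * c / 2 * (aplus - aminus) ^ 2) by
      linarith]
    field_simp
  refine ⟨hlt, ⟨u, hu, hβeq⟩, ?_⟩
  rw [hβeq, ge_iff_le]
  gcongr
  exact eight_le_neg_two_mul_S0'' ⟨ham.1.trans hu.1, hu.2.trans hap.2⟩

theorem euler_lagrange_forces_divergence (aplus aminus b c d α β : ℝ)
    (hap : aplus ∈ Set.Ioo (0:ℝ) 1) (ham : aminus ∈ Set.Ioo (0:ℝ) 1)
    (hb : b ∈ Set.Ioo (0:ℝ) 1) (hd : d ∈ Set.Ioo (0:ℝ) 1)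
    (hc : c ∈ Set.Ioo (0:ℝ) 1) (hβ : 0 < β)
    (hne : aplus ≠ aminus)
    (hEL : ∀ x ∈ I01, ∀ y ∈ I01,
      S0' (tripodal aplus aminus b c d x y)
        = α + 3 * β * ∫ z in I01,
            tripodal aplus aminus b c d x z * tripodal aplus aminus b c d y z) :
    aminus < aplus ∧
    (∃ u ∈ Set.Ioo aminus aplus, β = -2 * S0'' u / (3 * c * (aplus - aminus))) ∧
    β ≥ 8 / (3 * c * (aplus - aminus)) :=
  euler_lagrange_forces_divergence_general aplus aminus b c d α β hap ham hc hβ hne hEL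
end
end

section
/- For every point (ε₀, τ₀) in the interior of the set of achievable edge/triangle density pairs, there exist two graphons g, g' with ε(g)=ε(g')=ε₀ and τ(g)=τ(g')=τ₀ that are inequivalent, i.e., g' is not of the form g∘(φ×φ) for any measure-preserving bijection φ of [0,1] (for instance, g and g' can be chosen as step functions with different numbers or sizes of steps). -/
open MeasureTheory Real Set

noncomputable section

def edgeDensity (g : ℝ → ℝ → ℝ) : ℝ := ∫ x in I01, ∫ y in I01, g x y

def triDensity (g : ℝ → ℝ → ℝ) : ℝ :=
  ∫ x in I01, ∫ y in I01, ∫ z in I01, g x y * g y z * g z x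

def μ2 : Measure (ℝ × ℝ) := (volume.restrict I01).prod (volume.restrict I01)

/-- Graphon equivalence: equality a.e. after composing with `φ × φ` for a
measure-preserving bijection `φ` of `[0,1]`. -/
def GraphonEquiv (g g' : ℝ → ℝ → ℝ) : Prop :=
  ∃ φ : ℝ → ℝ, Set.BijOn φ I01 I01 ∧
    MeasurePreserving φ (volume.restrict I01) (volume.restrict I01) ∧
    (∀ᵐ p ∂μ2, g' p.1 p.2 = g (φ p.1) (φ p.2))

/-- The Razborov region of achievable edge/triangle density pairs. -/
def Razborov : Set (ℝ × ℝ) :=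
  {p | ∃ g : ℝ → ℝ → ℝ, IsGraphon g ∧ edgeDensity g = p.1 ∧ triDensity g = p.2}

/-!
Start from a graphon `G` with densities `(ε₀, τ₀)` whose values stay away from `0` and `1`. Such a
`G` exists because `(ε₀, τ₀)` is interior: slide from the constant graphon `ε₀` towards a graphon
of edge density `ε₀` whose triangle density lies beyond `τ₀`, and stop, by the intermediate value
theorem, where the triangle density is `τ₀`.

Blow `G` up four-fold along `x ↦ fract (4x)` and add the perturbation
`cos (2π(x + y)) · G(1 - G)` at the blown-up points. The four preimages `(u + j)/4` of a point `u`
shift the phase `2πx` by quarter turns, and averaging over them annihilates `cos (α + 2πx)` and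
`cos (α + 4πx)`. Integrating out one variable at a time therefore removes the perturbation from
the edge and triangle densities, whereas `∫ g²`, an invariant of equivalence, gains
`½ ∫ (G(1 - G))² > 0`.
-/

open Finset Function

instance : IsProbabilityMeasure (volume.restrict I01) :=
  ⟨by simp [I01]⟩

instance : IsProbabilityMeasure μ2 := by unfold μ2; infer_instance

lemma abs_mul_le_one {a b : ℝ} (ha : |a| ≤ 1) (hb : |b| ≤ 1) : |a * b| ≤ 1 := by
  rw [abs_mul]; exact mul_le_one₀ ha (abs_nonneg b) hb

lemma abs_div_two_le_one {a : ℝ} (ha : |a| ≤ 1) : |a / 2| ≤ 1 := by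
  rw [abs_div, abs_two]; linarith [abs_nonneg a]

section IntegralsOnI01

lemma integrableOn_I01 {f : ℝ → ℝ} {C : ℝ} (hf : Measurable f) (hC : ∀ x, |f x| ≤ C) :
    IntegrableOn f I01 :=
  Integrable.of_bound hf.aestronglyMeasurable C
    (ae_of_all _ fun x => (Real.norm_eq_abs (f x)).trans_le (hC x))

lemma abs_setIntegral_I01_le {f : ℝ → ℝ} {C : ℝ} (hC : ∀ x, |f x| ≤ C) :
    |∫ x in I01, f x| ≤ C := by
  simpa using norm_integral_le_of_norm_le_const (μ := volume.restrict I01) (f := f)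
    (ae_of_all _ fun x => (Real.norm_eq_abs (f x)).trans_le (hC x))

lemma abs_setIntegral_I01_sub_le {f g : ℝ → ℝ} {d : ℝ} (hf : IntegrableOn f I01)
    (hg : IntegrableOn g I01) (hd : ∀ x, |f x - g x| ≤ d) :
    |(∫ x in I01, f x) - ∫ x in I01, g x| ≤ d := by
  rw [← integral_sub hf hg]; exact abs_setIntegral_I01_le hd

lemma le_setIntegral_I01 {f : ℝ → ℝ} {c : ℝ} (hf : IntegrableOn f I01) (hc : ∀ x, c ≤ f x) :
    c ≤ ∫ x in I01, f x := by
  simpa using integral_mono (integrable_const c) hf hc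

lemma setIntegral_I01_const_mul_add_const_mul {f g : ℝ → ℝ} (hf : IntegrableOn f I01)
    (hg : IntegrableOn g I01) (a b : ℝ) :
    ∫ x in I01, (a * f x + b * g x) = a * (∫ x in I01, f x) + b * ∫ x in I01, g x := by
  rw [integral_add (hf.const_mul a) (hg.const_mul b), integral_const_mul, integral_const_mul]

lemma measurable_setIntegral_I01 {α : Type*} [MeasurableSpace α] {f : α → ℝ → ℝ}
    (hf : Measurable (uncurry f)) : Measurable fun a => ∫ y in I01, f a y :=
  hf.stronglyMeasurable.integral_prod_right'.measurable

lemma setIntegral_I01_eq_intervalIntegral (f : ℝ → ℝ) :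
    ∫ x in I01, f x = ∫ x in (0 : ℝ)..1, f x := by
  rw [intervalIntegral.integral_of_le zero_le_one, I01, integral_Icc_eq_integral_Ioc]

end IntegralsOnI01

section Fract

lemma intervalIntegral_comp_fract_mul_piece {n : ℕ} (hn : n ≠ 0) (F : ℝ → ℝ → ℝ) (j : ℕ) :
    ∫ x in (j / n : ℝ)..((j + 1) / n), F x (Int.fract (n * x))
      = (n : ℝ)⁻¹ * ∫ u in (0 : ℝ)..1, F ((u + j) / n) u := by
  have hn' : (0 : ℝ) < n := by positivity
  have hfract : ∀ᵐ x, x ∈ uIoc (j / n : ℝ) ((j + 1) / n) →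
      F x (Int.fract (n * x)) = (fun u => F ((u + j) / n) u) (n * x - j) := by
    filter_upwards [Measure.ae_ne volume ((j + 1) / n : ℝ)] with x hne hx
    rw [uIoc_of_le (by gcongr; linarith)] at hx
    have hgt : j < n * x := by rw [← div_lt_iff₀' hn']; exact hx.1
    have hlt : n * x < j + 1 := by rw [← lt_div_iff₀' hn']; exact lt_of_le_of_ne hx.2 hne
    have hfloor : ⌊(n : ℝ) * x⌋ = j := by
      rw [Int.floor_eq_iff]; push_cast; exact ⟨hgt.le, hlt⟩
    simp only [← Int.self_sub_floor, hfloor, Int.cast_natCast]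
    congr 1
    field_simp
    ring
  rw [intervalIntegral.integral_congr_ae hfract,
    intervalIntegral.integral_comp_mul_sub (fun u => F ((u + j) / n) u) hn'.ne', smul_eq_mul]
  congr 2 <;> field_simp <;> ring

theorem setIntegral_comp_fract_mul {n : ℕ} (hn : n ≠ 0) {F : ℝ → ℝ → ℝ} {C : ℝ}
    (hF : Measurable (uncurry F)) (hC : ∀ x y, |F x y| ≤ C) :
    ∫ x in I01, F x (Int.fract (n * x))
      = ∫ u in I01, (n : ℝ)⁻¹ * ∑ j ∈ range n, F ((u + j) / n) u := by
  have hpiece (j : ℕ) (_ : j ∈ range n) :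
      Integrable (fun u => F ((u + j) / n) u) (volume.restrict I01) :=
    integrableOn_I01 (by fun_prop) fun u => hC _ _
  have hint : IntegrableOn (fun x => F x (Int.fract (n * x))) I01 :=
    integrableOn_I01 (by fun_prop) fun x => hC _ _
  have hmem (k : ℕ) (hk : k ≤ n) : (k / n : ℝ) ∈ I01 :=
    ⟨by positivity, div_le_one_of_le₀ (by exact_mod_cast hk) (Nat.cast_nonneg n)⟩
  have hadj := intervalIntegral.sum_integral_adjacent_intervals (a := fun k : ℕ => (k / n : ℝ))
    (f := fun x => F x (Int.fract (n * x))) (μ := volume) (n := n) fun k hk =>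
      (hint.mono_set (uIcc_subset_Icc (hmem k hk.le) (hmem (k + 1) hk))).intervalIntegrable
  simp only [Nat.cast_zero, zero_div, Nat.cast_add, Nat.cast_one,
    div_self (Nat.cast_ne_zero.2 hn : (n : ℝ) ≠ 0)] at hadj
  rw [setIntegral_I01_eq_intervalIntegral, ← hadj, integral_const_mul,
    integral_finsetSum _ hpiece, mul_sum]
  refine sum_congr rfl fun j _ => ?_
  rw [intervalIntegral_comp_fract_mul_piece hn, setIntegral_I01_eq_intervalIntegral]

lemma setIntegral_comp_fract {n : ℕ} (hn : n ≠ 0) {f : ℝ → ℝ} {C : ℝ} (hf : Measurable f)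
    (hC : ∀ u, |f u| ≤ C) :
    ∫ x in I01, f (Int.fract (n * x)) = ∫ u in I01, f u := by
  rw [setIntegral_comp_fract_mul hn (F := fun _ u => f u) (by fun_prop) fun _ u => hC u]
  simp only [sum_const, card_range, nsmul_eq_mul]
  field_simp

lemma sum_range_four_cos_add_two_pi_mul (θ : ℝ) :
    ∑ j ∈ range 4, cos (θ + 2 * π * j / 4) = 0 := by
  have h1 : cos (θ + 2 * π * 1 / 4) = -sin θ := by
    rw [← cos_add_pi_div_two]; ring_nf
  have h2 : cos (θ + 2 * π * 2 / 4) = -cos θ := by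
    rw [← cos_add_pi]; ring_nf
  have h3 : cos (θ + 2 * π * 3 / 4) = sin θ := by
    rw [← neg_neg (sin θ), ← cos_add_pi_div_two, ← cos_add_pi]; ring_nf
  simp only [sum_range_succ, range_zero, sum_empty, Nat.cast_zero, Nat.cast_one, Nat.cast_ofNat,
    mul_zero, zero_div, add_zero, h1, h2, h3]
  ring

lemma sum_range_four_cos_add_four_pi_mul (θ : ℝ) :
    ∑ j ∈ range 4, cos (θ + 4 * π * j / 4) = 0 := by
  have h (k : ℕ) : cos (θ + 4 * π * (k + 1 : ℕ) / 4) = -cos (θ + 4 * π * k / 4) := by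
    rw [← cos_add_pi]; push_cast; ring_nf
  simp only [sum_range_succ, range_zero, sum_empty, h]
  ring

lemma cos_mul_cos (x y : ℝ) : cos x * cos y = (cos (x - y) + cos (x + y)) / 2 := by
  rw [cos_sub, cos_add]; ring

lemma abs_add_cos_mul_le {a b A B : ℝ} (ha : |a| ≤ A) (hb : |b| ≤ B) (θ : ℝ) :
    |a + cos θ * b| ≤ A + B := by
  calc |a + cos θ * b| ≤ |a| + |cos θ| * |b| := (abs_add_le _ _).trans_eq (by rw [abs_mul])
    _ ≤ A + 1 * B := by gcongr; exact abs_cos_le_one θ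
    _ = A + B := by rw [one_mul]

theorem setIntegral_add_cos_mul_comp_fract {ω : ℝ}
    (hω : ∀ θ, ∑ j ∈ range 4, cos (θ + ω * j / 4) = 0) {a b : ℝ → ℝ} {A B : ℝ}
    (ha : Measurable a) (hb : Measurable b) (haA : ∀ u, |a u| ≤ A) (hbB : ∀ u, |b u| ≤ B)
    (α : ℝ) :
    ∫ x in I01, (a (Int.fract (4 * x)) + cos (α + ω * x) * b (Int.fract (4 * x)))
      = ∫ u in I01, a u := by
  have h := setIntegral_comp_fract_mul (n := 4) four_ne_zero
    (F := fun x u => a u + cos (α + ω * x) * b u) (by fun_prop)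
    (fun x u => abs_add_cos_mul_le (haA u) (hbB u) _)
  push_cast at h
  rw [h]
  refine setIntegral_congr_fun measurableSet_Icc fun u _ => ?_
  have hphase : ∑ j ∈ range 4, cos (α + ω * ((u + j) / 4)) = 0 := by
    rw [← hω (α + ω * u / 4)]
    exact sum_congr rfl fun j _ => by ring_nf
  simp only [sum_add_distrib, ← sum_mul, hphase, sum_const, card_range]
  ring

theorem setIntegral_mul_of_add_cos_mul_comp_fract {a b c d : ℝ → ℝ}
    (ha : Measurable a) (hb : Measurable b) (hc : Measurable c) (hd : Measurable d)
    (ha1 : ∀ u, |a u| ≤ 1) (hb1 : ∀ u, |b u| ≤ 1) (hc1 : ∀ u, |c u| ≤ 1) (hd1 : ∀ u, |d u| ≤ 1)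
    (α β : ℝ) :
    ∫ z in I01, (a (Int.fract (4 * z)) + cos (α + 2 * π * z) * b (Int.fract (4 * z)))
        * (c (Int.fract (4 * z)) + cos (β + 2 * π * z) * d (Int.fract (4 * z)))
      = (∫ u in I01, a u * c u) + cos (α - β) / 2 * ∫ u in I01, b u * d u := by
  have h := setIntegral_comp_fract_mul (n := 4) four_ne_zero
    (F := fun z u => (a u + cos (α + 2 * π * z) * b u) * (c u + cos (β + 2 * π * z) * d u))
    (by fun_prop) fun z u => by
      rw [abs_mul]
      exact mul_le_mul (abs_add_cos_mul_le (ha1 u) (hb1 u) _)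
        (abs_add_cos_mul_le (hc1 u) (hd1 u) _) (abs_nonneg _) (by norm_num)
  push_cast at h
  have hac : IntegrableOn (fun u => a u * c u) I01 :=
    integrableOn_I01 (ha.mul hc) fun u => abs_mul_le_one (ha1 u) (hc1 u)
  have hbd : IntegrableOn (fun u => b u * d u) I01 :=
    integrableOn_I01 (hb.mul hd) fun u => abs_mul_le_one (hb1 u) (hd1 u)
  rw [h, ← integral_const_mul, ← integral_add hac (hbd.const_mul (cos (α - β) / 2))]
  refine setIntegral_congr_fun measurableSet_Icc fun u _ => ?_
  have hlin (γ : ℝ) : ∑ j ∈ range 4, cos (γ + 2 * π * ((u + j) / 4)) = 0 := by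
    rw [← sum_range_four_cos_add_two_pi_mul (γ + π * u / 2)]
    exact sum_congr rfl fun j _ => by ring_nf
  have hosc : ∑ j ∈ range 4, cos (α + β + 4 * π * ((u + j) / 4)) = 0 := by
    rw [← sum_range_four_cos_add_four_pi_mul (α + β + π * u)]
    exact sum_congr rfl fun j _ => by ring_nf
  have hquad : ∑ j ∈ range 4, cos (α + 2 * π * ((u + j) / 4)) * cos (β + 2 * π * ((u + j) / 4))
      = 2 * cos (α - β) := by
    calc ∑ j ∈ range 4, cos (α + 2 * π * ((u + j) / 4)) * cos (β + 2 * π * ((u + j) / 4))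
        = ∑ j ∈ range 4, (cos (α - β) + cos (α + β + 4 * π * ((u + j) / 4))) / 2 :=
          sum_congr rfl fun j _ => by rw [cos_mul_cos]; ring_nf
      _ = 2 * cos (α - β) := by
          rw [← sum_div, sum_add_distrib, hosc, sum_const, card_range]; ring
  have hexpand (A B : ℝ) : (a u + cos A * b u) * (c u + cos B * d u)
      = a u * c u + cos B * (a u * d u) + cos A * (b u * c u) + cos A * cos B * (b u * d u) := by
    ring
  simp only [hexpand, sum_add_distrib, ← sum_mul, hlin, hquad, sum_const, card_range]
  ring

end Fract

namespace IsGraphon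

variable {g : ℝ → ℝ → ℝ}

lemma measurable (hg : IsGraphon g) : Measurable (uncurry g) := hg.1

lemma symm (hg : IsGraphon g) (x y : ℝ) : g x y = g y x := hg.2.1 x y

lemma nonneg (hg : IsGraphon g) (x y : ℝ) : 0 ≤ g x y := (hg.2.2 x y).1

lemma le_one (hg : IsGraphon g) (x y : ℝ) : g x y ≤ 1 := (hg.2.2 x y).2

lemma abs_le_one (hg : IsGraphon g) (x y : ℝ) : |g x y| ≤ 1 :=
  abs_le.2 ⟨by linarith [hg.nonneg x y], hg.le_one x y⟩

lemma integrableOn_row (hg : IsGraphon g) (x : ℝ) : IntegrableOn (g x) I01 :=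
  have := hg.measurable
  integrableOn_I01 (by fun_prop) (hg.abs_le_one x)

lemma integrableOn_degree (hg : IsGraphon g) :
    IntegrableOn (fun x => ∫ y in I01, g x y) I01 :=
  integrableOn_I01 (measurable_setIntegral_I01 hg.measurable) fun x =>
    abs_setIntegral_I01_le (hg.abs_le_one x)

lemma edgeDensity_nonneg (hg : IsGraphon g) : 0 ≤ edgeDensity g :=
  integral_nonneg fun x => integral_nonneg fun y => hg.nonneg x y

lemma edgeDensity_le_one (hg : IsGraphon g) : edgeDensity g ≤ 1 :=
  (le_abs_self _).trans (abs_setIntegral_I01_le fun x => abs_setIntegral_I01_le (hg.abs_le_one x))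

end IsGraphon

lemma isGraphon_const {c : ℝ} (hc : c ∈ Icc (0 : ℝ) 1) : IsGraphon fun _ _ => c :=
  ⟨measurable_const, fun _ _ => rfl, fun _ _ => hc⟩

lemma edgeDensity_const (c : ℝ) : edgeDensity (fun _ _ => c) = c := by
  simp [edgeDensity]

def codegree (g : ℝ → ℝ → ℝ) (s t : ℝ) : ℝ := ∫ u in I01, g s u * g t u

lemma measurable_codegree {g : ℝ → ℝ → ℝ} (hg : Measurable (uncurry g)) :
    Measurable (uncurry (codegree g)) :=
  measurable_setIntegral_I01 (f := fun (p : ℝ × ℝ) u => g p.1 u * g p.2 u) (by fun_prop)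

lemma IsGraphon.abs_codegree_le_one {g : ℝ → ℝ → ℝ} (hg : IsGraphon g) (s t : ℝ) :
    |codegree g s t| ≤ 1 :=
  abs_setIntegral_I01_le fun u => abs_mul_le_one (hg.abs_le_one s u) (hg.abs_le_one t u)

lemma IsGraphon.triDensity_eq {g : ℝ → ℝ → ℝ} (hg : IsGraphon g) :
    triDensity g = ∫ x in I01, ∫ y in I01, g x y * codegree g y x := by
  refine setIntegral_congr_fun measurableSet_Icc fun x _ =>
    setIntegral_congr_fun measurableSet_Icc fun y _ => ?_
  simp only [codegree, ← integral_const_mul, mul_assoc, hg.symm _ x]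

def sqDensity (g : ℝ → ℝ → ℝ) : ℝ := ∫ x in I01, ∫ y in I01, g x y ^ 2

lemma sqDensity_zero : sqDensity (fun _ _ => 0) = 0 := by simp [sqDensity]

lemma IsGraphon.sq_le_sqDensity {g : ℝ → ℝ → ℝ} (hg : IsGraphon g) {c : ℝ} (hc : 0 ≤ c)
    (hgc : ∀ x y, c ≤ g x y) : c ^ 2 ≤ sqDensity g := by
  have := hg.measurable
  have hsq (x y : ℝ) : |g x y ^ 2| ≤ 1 := by
    rw [sq]; exact abs_mul_le_one (hg.abs_le_one x y) (hg.abs_le_one x y)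
  refine le_setIntegral_I01 (integrableOn_I01 (measurable_setIntegral_I01 (by fun_prop))
    fun x => abs_setIntegral_I01_le (hsq x)) fun x => ?_
  exact le_setIntegral_I01 (integrableOn_I01 (by fun_prop) (hsq x)) fun y =>
    pow_le_pow_left₀ hc (hgc x y) 2

lemma IsGraphon.sqDensity_eq_integral {g : ℝ → ℝ → ℝ} (hg : IsGraphon g) :
    sqDensity g = ∫ p, g p.1 p.2 ^ 2 ∂μ2 :=
  (integral_prod (fun p : ℝ × ℝ => g p.1 p.2 ^ 2) (Integrable.of_bound
    (hg.measurable.pow_const 2).aestronglyMeasurable 1 (ae_of_all _ fun p => by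
      rw [Real.norm_eq_abs, abs_pow]; exact pow_le_one₀ (abs_nonneg _) (hg.abs_le_one _ _)))).symm

lemma IsGraphon.sqDensity_eq_of_graphonEquiv {g g' : ℝ → ℝ → ℝ} (hg : IsGraphon g)
    (hg' : IsGraphon g') (h : GraphonEquiv g g') : sqDensity g' = sqDensity g := by
  obtain ⟨φ, -, hφ, hae⟩ := h
  have hφφ : MeasurePreserving (Prod.map φ φ) μ2 μ2 := hφ.prod hφ
  have hmap := integral_map (μ := μ2) hφφ.measurable.aemeasurable
    (f := fun q : ℝ × ℝ => g q.1 q.2 ^ 2) (hg.measurable.pow_const 2).aestronglyMeasurable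
  rw [hφφ.map_eq] at hmap
  rw [hg'.sqDensity_eq_integral, hg.sqDensity_eq_integral, hmap]
  exact integral_congr_ae (hae.mono fun p hp => by simp only [hp, Prod.map_fst, Prod.map_snd])

def twistedBlowup (G H : ℝ → ℝ → ℝ) (x y : ℝ) : ℝ :=
  G (Int.fract (4 * x)) (Int.fract (4 * y))
    + cos (2 * π * x + 2 * π * y) * H (Int.fract (4 * x)) (Int.fract (4 * y))

section TwistedBlowup

variable {G H : ℝ → ℝ → ℝ}

lemma twistedBlowup_symm (hG : IsGraphon G) (hH : IsGraphon H) (x y : ℝ) :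
    twistedBlowup G H x y = twistedBlowup G H y x := by
  simp only [twistedBlowup, hG.symm (Int.fract (4 * x)), hH.symm (Int.fract (4 * x)),
    add_comm (2 * π * x)]

lemma isGraphon_twistedBlowup (hG : IsGraphon G) (hH : IsGraphon H)
    (hHG : ∀ x y, H x y ≤ G x y) (hHG' : ∀ x y, H x y ≤ 1 - G x y) :
    IsGraphon (twistedBlowup G H) := by
  have := hG.measurable; have := hH.measurable
  refine ⟨by unfold twistedBlowup; fun_prop, twistedBlowup_symm hG hH, fun x y => ?_⟩
  have hc := neg_one_le_cos (2 * π * x + 2 * π * y)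
  have hc' := cos_le_one (2 * π * x + 2 * π * y)
  have h0 := hH.nonneg (Int.fract (4 * x)) (Int.fract (4 * y))
  have h1 := hHG (Int.fract (4 * x)) (Int.fract (4 * y))
  have h2 := hHG' (Int.fract (4 * x)) (Int.fract (4 * y))
  constructor <;> simp only [twistedBlowup] <;> nlinarith

lemma edgeDensity_twistedBlowup (hG : IsGraphon G) (hH : IsGraphon H) :
    edgeDensity (twistedBlowup G H) = edgeDensity G := by
  have := hG.measurable; have := hH.measurable
  have hrow (x : ℝ) : ∫ y in I01, twistedBlowup G H x y = ∫ u in I01, G (Int.fract (4 * x)) u :=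
    setIntegral_add_cos_mul_comp_fract sum_range_four_cos_add_two_pi_mul (by fun_prop)
      (by fun_prop) (hG.abs_le_one _) (hH.abs_le_one _) (2 * π * x)
  unfold edgeDensity
  simp only [hrow]
  simpa using setIntegral_comp_fract (n := 4) four_ne_zero
    (measurable_setIntegral_I01 (f := G) hG.measurable)
    fun s => abs_setIntegral_I01_le (hG.abs_le_one s)

lemma setIntegral_twistedBlowup_mul (hG : IsGraphon G) (hH : IsGraphon H) (x y : ℝ) :
    ∫ z in I01, twistedBlowup G H x z * twistedBlowup G H y z
      = codegree G (Int.fract (4 * x)) (Int.fract (4 * y))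
        + cos (2 * π * x - 2 * π * y) / 2 * codegree H (Int.fract (4 * x)) (Int.fract (4 * y)) :=
  have := hG.measurable; have := hH.measurable
  setIntegral_mul_of_add_cos_mul_comp_fract (by fun_prop) (by fun_prop) (by fun_prop)
    (by fun_prop) (hG.abs_le_one _) (hH.abs_le_one _) (hG.abs_le_one _) (hH.abs_le_one _) _ _

/-- Stated in the shape `a (fract (4x)) + cos (α + 4πx) * b (fract (4x))` that
`setIntegral_add_cos_mul_comp_fract` integrates. -/
lemma setIntegral_setIntegral_twistedBlowup_triangle (hG : IsGraphon G) (hH : IsGraphon H)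
    (x : ℝ) :
    ∫ y in I01, ∫ z in I01, twistedBlowup G H x y * twistedBlowup G H y z * twistedBlowup G H z x
      = (∫ v in I01, G (Int.fract (4 * x)) v * codegree G v (Int.fract (4 * x)))
        + cos (0 + 4 * π * x) * ((∫ v in I01, H (Int.fract (4 * x)) v
            * (codegree H v (Int.fract (4 * x)) / 2)) / 2) := by
  have := hG.measurable; have := hH.measurable
  have := measurable_codegree hG.measurable; have := measurable_codegree hH.measurable
  have hz (y : ℝ) :
      ∫ z in I01, twistedBlowup G H x y * twistedBlowup G H y z * twistedBlowup G H z x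
        = twistedBlowup G H x y * (codegree G (Int.fract (4 * y)) (Int.fract (4 * x))
          + cos (-(2 * π * x) + 2 * π * y)
            * (codegree H (Int.fract (4 * y)) (Int.fract (4 * x)) / 2)) := by
    simp only [mul_assoc, integral_const_mul, twistedBlowup_symm hG hH _ x,
      setIntegral_twistedBlowup_mul hG hH, neg_add_eq_sub]
    ring
  simp only [hz]
  refine (setIntegral_mul_of_add_cos_mul_comp_fract (a := G (Int.fract (4 * x)))
    (b := H (Int.fract (4 * x))) (c := fun v => codegree G v (Int.fract (4 * x)))
    (d := fun v => codegree H v (Int.fract (4 * x)) / 2) (by fun_prop) (by fun_prop)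
    (by fun_prop) (by fun_prop) (hG.abs_le_one _) (hH.abs_le_one _)
    (fun v => hG.abs_codegree_le_one v _)
    (fun v => abs_div_two_le_one (hH.abs_codegree_le_one v _))
    (2 * π * x) (-(2 * π * x))).trans ?_
  ring_nf

lemma triDensity_twistedBlowup (hG : IsGraphon G) (hH : IsGraphon H) :
    triDensity (twistedBlowup G H) = triDensity G := by
  have := hG.measurable; have := hH.measurable
  have := measurable_codegree hG.measurable; have := measurable_codegree hH.measurable
  unfold triDensity
  simp only [setIntegral_setIntegral_twistedBlowup_triangle hG hH]
  refine (setIntegral_add_cos_mul_comp_fract sum_range_four_cos_add_four_pi_mul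
    (a := fun s => ∫ v in I01, G s v * codegree G v s)
    (b := fun s => (∫ v in I01, H s v * (codegree H v s / 2)) / 2)
    (measurable_setIntegral_I01 (f := fun s v => G s v * codegree G v s) (by fun_prop))
    ((measurable_setIntegral_I01 (f := fun s v => H s v * (codegree H v s / 2))
      (by fun_prop)).div_const 2)
    (fun s => abs_setIntegral_I01_le fun v =>
      abs_mul_le_one (hG.abs_le_one s v) (hG.abs_codegree_le_one v s))
    (fun s => abs_div_two_le_one (abs_setIntegral_I01_le fun v =>
      abs_mul_le_one (hH.abs_le_one s v) (abs_div_two_le_one (hH.abs_codegree_le_one v s))))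
    0).trans hG.triDensity_eq.symm

lemma sqDensity_twistedBlowup (hG : IsGraphon G) (hH : IsGraphon H) :
    sqDensity (twistedBlowup G H) = sqDensity G + sqDensity H / 2 := by
  have := measurable_codegree hG.measurable; have := measurable_codegree hH.measurable
  have hrow (x : ℝ) : ∫ y in I01, twistedBlowup G H x y ^ 2
      = (fun s => codegree G s s + codegree H s s / 2) (Int.fract (4 * x)) := by
    simp only [sq, setIntegral_twistedBlowup_mul hG hH, sub_self, cos_zero]
    ring
  have hdiag (g : ℝ → ℝ → ℝ) (s : ℝ) : codegree g s s = ∫ y in I01, g s y ^ 2 := by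
    simp only [codegree, sq]
  have hGi : IntegrableOn (fun s => codegree G s s) I01 :=
    integrableOn_I01 (by fun_prop) fun s => hG.abs_codegree_le_one s s
  have hHi : IntegrableOn (fun s => codegree H s s / 2) I01 :=
    integrableOn_I01 (by fun_prop) fun s => abs_div_two_le_one (hH.abs_codegree_le_one s s)
  have hpush := setIntegral_comp_fract (n := 4) four_ne_zero
    (f := fun s => codegree G s s + codegree H s s / 2) (by fun_prop)
    fun s => (abs_add_le _ _).trans
      (add_le_add (hG.abs_codegree_le_one s s) (abs_div_two_le_one (hH.abs_codegree_le_one s s)))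
  push_cast at hpush
  unfold sqDensity
  simp only [hrow]
  rw [hpush, integral_add hGi hHi, integral_div]
  simp only [hdiag]

end TwistedBlowup

theorem exists_not_graphonEquiv_of_le_mul_one_sub {G : ℝ → ℝ → ℝ} (hG : IsGraphon G) {c : ℝ}
    (hc : 0 < c) (hGc : ∀ x y, c ≤ G x y * (1 - G x y)) :
    ∃ g g' : ℝ → ℝ → ℝ, IsGraphon g ∧ IsGraphon g' ∧
      edgeDensity g = edgeDensity G ∧ edgeDensity g' = edgeDensity G ∧
      triDensity g = triDensity G ∧ triDensity g' = triDensity G ∧ ¬ GraphonEquiv g g' := by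
  have h0 : IsGraphon fun _ _ => 0 := isGraphon_const ⟨le_rfl, zero_le_one⟩
  set H := fun x y => G x y * (1 - G x y)
  have hH : IsGraphon H := by
    have := hG.measurable
    refine ⟨by fun_prop, fun x y => by simp only [H, hG.symm x y], fun x y => ⟨?_, ?_⟩⟩ <;>
      nlinarith [hG.nonneg x y, hG.le_one x y]
  have hHG (x y : ℝ) : H x y ≤ G x y := by nlinarith [hG.nonneg x y, hG.le_one x y]
  have hHG' (x y : ℝ) : H x y ≤ 1 - G x y := by nlinarith [hG.nonneg x y, hG.le_one x y]
  have hg := isGraphon_twistedBlowup hG h0 hG.nonneg fun x y => sub_nonneg.2 (hG.le_one x y)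
  have hg' := isGraphon_twistedBlowup hG hH hHG hHG'
  refine ⟨_, _, hg, hg', edgeDensity_twistedBlowup hG h0, edgeDensity_twistedBlowup hG hH,
    triDensity_twistedBlowup hG h0, triDensity_twistedBlowup hG hH, fun hequiv => ?_⟩
  have hsq := hg.sqDensity_eq_of_graphonEquiv hg' hequiv
  rw [sqDensity_twistedBlowup hG hH, sqDensity_twistedBlowup hG h0, sqDensity_zero] at hsq
  nlinarith [hH.sq_le_sqDensity hc.le hGc]

def mix (s : ℝ) (p q : ℝ → ℝ → ℝ) (x y : ℝ) : ℝ := (1 - s) * p x y + s * q x y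

section Mix

variable {p q : ℝ → ℝ → ℝ}

lemma mix_zero : mix 0 p q = p := by funext x y; simp [mix]

lemma mix_one : mix 1 p q = q := by funext x y; simp [mix]

lemma isGraphon_mix (hp : IsGraphon p) (hq : IsGraphon q) {s : ℝ} (hs : s ∈ Icc (0 : ℝ) 1) :
    IsGraphon (mix s p q) := by
  have := hp.measurable; have := hq.measurable
  refine ⟨by unfold mix; fun_prop, fun x y => by simp only [mix, hp.symm x y, hq.symm x y],
    fun x y => ⟨?_, ?_⟩⟩ <;> simp only [mix] <;>
    nlinarith [hp.nonneg x y, hp.le_one x y, hq.nonneg x y, hq.le_one x y, hs.1, hs.2]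

lemma edgeDensity_mix (hp : IsGraphon p) (hq : IsGraphon q) (s : ℝ) :
    edgeDensity (mix s p q) = (1 - s) * edgeDensity p + s * edgeDensity q := by
  unfold edgeDensity mix
  simp only [setIntegral_I01_const_mul_add_const_mul (hp.integrableOn_row _)
    (hq.integrableOn_row _)]
  exact setIntegral_I01_const_mul_add_const_mul hp.integrableOn_degree hq.integrableOn_degree _ _

lemma abs_mul_mul_sub_mul_mul_le {a b c a' b' c' d : ℝ} (hb : |b| ≤ 1) (hc : |c| ≤ 1)
    (ha' : |a'| ≤ 1) (hb' : |b'| ≤ 1) (hda : |a - a'| ≤ d) (hdb : |b - b'| ≤ d)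
    (hdc : |c - c'| ≤ d) : |a * b * c - a' * b' * c'| ≤ 3 * d := by
  have hterm (u v : ℝ) (hu : |u| ≤ d) (hv : |v| ≤ 1) : |u * v| ≤ d := by
    rw [abs_mul]; nlinarith [abs_nonneg u, abs_nonneg v]
  calc |a * b * c - a' * b' * c'|
      = |(a - a') * (b * c) + (b - b') * (a' * c) + (c - c') * (a' * b')| := by ring_nf
    _ ≤ |(a - a') * (b * c)| + |(b - b') * (a' * c)| + |(c - c') * (a' * b')| :=
      (abs_add_le _ _).trans (add_le_add_left (abs_add_le _ _) _)
    _ ≤ d + d + d := add_le_add_three (hterm _ _ hda (abs_mul_le_one hb hc))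
      (hterm _ _ hdb (abs_mul_le_one ha' hc)) (hterm _ _ hdc (abs_mul_le_one ha' hb'))
    _ = 3 * d := by ring

lemma IsGraphon.integrableOn_triangle (hp : IsGraphon p) :
    IntegrableOn (fun x => ∫ y in I01, ∫ z in I01, p x y * p y z * p z x) I01 ∧
    (∀ x, IntegrableOn (fun y => ∫ z in I01, p x y * p y z * p z x) I01) ∧
    ∀ x y, IntegrableOn (fun z => p x y * p y z * p z x) I01 := by
  have := hp.measurable
  have h1 (x y z : ℝ) : |p x y * p y z * p z x| ≤ 1 :=
    abs_mul_le_one (abs_mul_le_one (hp.abs_le_one x y) (hp.abs_le_one y z)) (hp.abs_le_one z x)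
  refine ⟨integrableOn_I01 (measurable_setIntegral_I01 (measurable_setIntegral_I01
      (f := fun (w : ℝ × ℝ) z => p w.1 w.2 * p w.2 z * p z w.1) (by fun_prop)))
      fun x => abs_setIntegral_I01_le fun y => abs_setIntegral_I01_le (h1 x y),
    fun x => integrableOn_I01 (measurable_setIntegral_I01 (by fun_prop))
      fun y => abs_setIntegral_I01_le (h1 x y),
    fun x y => integrableOn_I01 (by fun_prop) (h1 x y)⟩

lemma abs_triDensity_sub_le (hp : IsGraphon p) (hq : IsGraphon q) {d : ℝ}
    (hd : ∀ x y, |p x y - q x y| ≤ d) : |triDensity p - triDensity q| ≤ 3 * d := by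
  obtain ⟨hpx, hpy, hpz⟩ := hp.integrableOn_triangle
  obtain ⟨hqx, hqy, hqz⟩ := hq.integrableOn_triangle
  exact abs_setIntegral_I01_sub_le hpx hqx fun x =>
    abs_setIntegral_I01_sub_le (hpy x) (hqy x) fun y =>
    abs_setIntegral_I01_sub_le (hpz x y) (hqz x y) fun z =>
    abs_mul_mul_sub_mul_mul_le (hp.abs_le_one y z) (hp.abs_le_one z x) (hq.abs_le_one x y)
      (hq.abs_le_one y z) (hd x y) (hd y z) (hd z x)

lemma exists_triDensity_mix_eq (hp : IsGraphon p) (hq : IsGraphon q) {t : ℝ}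
    (ht : t ∈ uIcc (triDensity p) (triDensity q)) :
    ∃ s ∈ Icc (0 : ℝ) 1, triDensity (mix s p q) = t := by
  have hlip : LipschitzOnWith 3 (fun s => triDensity (mix s p q)) (Icc 0 1) :=
    LipschitzOnWith.of_dist_le_mul fun s hs u hu => by
      simp only [Real.dist_eq, NNReal.coe_ofNat]
      refine abs_triDensity_sub_le (isGraphon_mix hp hq hs) (isGraphon_mix hp hq hu)
        fun x y => ?_
      rw [show mix s p q x y - mix u p q x y = (s - u) * (q x y - p x y) by unfold mix; ring,
        abs_mul]
      exact mul_le_of_le_one_right (abs_nonneg _) (abs_sub_le_iff.2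
        ⟨by linarith [hq.le_one x y, hp.nonneg x y], by linarith [hp.le_one x y, hq.nonneg x y]⟩)
  have hcont := hlip.continuousOn
  rw [← Set.uIcc_of_le zero_le_one] at hcont
  obtain ⟨s, hs, hst⟩ := intermediate_value_uIcc hcont (by simpa [mix_zero, mix_one] using ht)
  exact ⟨s, by rwa [Set.uIcc_of_le zero_le_one] at hs, hst⟩

end Mix

lemma exists_box_subset_of_mem_interior {S : Set (ℝ × ℝ)} {p : ℝ × ℝ} (h : p ∈ interior S) :
    ∃ δ > 0, ∀ e t, |e - p.1| ≤ δ → |t - p.2| ≤ δ → (e, t) ∈ S := by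
  obtain ⟨r, hr, hball⟩ := Metric.mem_nhds_iff.1 (mem_interior_iff_mem_nhds.1 h)
  refine ⟨r / 2, half_pos hr, fun e t he ht => hball ?_⟩
  rw [Metric.mem_ball, Prod.dist_eq, Real.dist_eq, Real.dist_eq]
  exact max_lt (by linarith) (by linarith)

theorem exists_isGraphon_le_mul_one_sub_of_mem_interior {ε₀ τ₀ : ℝ}
    (h : (ε₀, τ₀) ∈ interior Razborov) :
    ∃ G, IsGraphon G ∧ edgeDensity G = ε₀ ∧ triDensity G = τ₀ ∧
      ∃ c > 0, ∀ x y, c ≤ G x y * (1 - G x y) := by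
  obtain ⟨δ, hδ, hbox⟩ := exists_box_subset_of_mem_interior h
  obtain ⟨gl, hgl, hel, -⟩ := hbox (ε₀ - δ) τ₀ (by simp [abs_of_pos hδ]) (by simp [hδ.le])
  obtain ⟨gr, hgr, her, -⟩ := hbox (ε₀ + δ) τ₀ (by simp [abs_of_pos hδ]) (by simp [hδ.le])
  have hε₀ : 0 < ε₀ := by linarith [hgl.edgeDensity_nonneg, show edgeDensity gl = ε₀ - δ from hel]
  have hε₁ : ε₀ < 1 := by linarith [hgr.edgeDensity_le_one, show edgeDensity gr = ε₀ + δ from her]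
  set k : ℝ → ℝ → ℝ := fun _ _ => ε₀
  have hk : IsGraphon k := isGraphon_const ⟨hε₀.le, hε₁.le⟩
  obtain ⟨q, hq, heq, htq, hne⟩ : ∃ q, IsGraphon q ∧ edgeDensity q = ε₀ ∧
      τ₀ ∈ uIcc (triDensity k) (triDensity q) ∧ triDensity q ≠ τ₀ := by
    rcases le_or_gt (triDensity k) τ₀ with hle | hgt
    · obtain ⟨q, hq, he, ht⟩ := hbox ε₀ (τ₀ + δ) (by simp [hδ.le]) (by simp [abs_of_pos hδ])
      exact ⟨q, hq, he, Set.mem_uIcc.2 (Or.inl ⟨hle, by simp only at ht; linarith⟩),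
        by simp only at ht; linarith⟩
    · obtain ⟨q, hq, he, ht⟩ := hbox ε₀ (τ₀ - δ) (by simp [hδ.le]) (by simp [abs_of_pos hδ])
      exact ⟨q, hq, he, Set.mem_uIcc.2 (Or.inr ⟨by simp only at ht; linarith, hgt.le⟩),
        by simp only at ht; linarith⟩
  obtain ⟨s, hs, hst⟩ := exists_triDensity_mix_eq hk hq htq
  have hs1 : s < 1 := lt_of_le_of_ne hs.2 (by rintro rfl; exact hne (by rwa [mix_one] at hst))
  refine ⟨mix s k q, isGraphon_mix hk hq hs,
    by rw [edgeDensity_mix hk hq, edgeDensity_const, heq]; ring,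
    hst, (1 - s) * ε₀ * ((1 - s) * (1 - ε₀)), by have := sub_pos.2 hs1; positivity,
    fun x y => ?_⟩
  have h1 : (1 - s) * ε₀ ≤ mix s k q x y := by
    simp only [mix, k]; nlinarith [hq.nonneg x y, hs.1]
  have h2 : (1 - s) * (1 - ε₀) ≤ 1 - mix s k q x y := by
    simp only [mix, k]; nlinarith [hq.le_one x y, hs.1]
  exact mul_le_mul h1 h2 (by nlinarith) (by nlinarith)

theorem interior_points_not_finitely_forced (ε₀ τ₀ : ℝ)
    (h : (ε₀, τ₀) ∈ interior Razborov) :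
    ∃ g g' : ℝ → ℝ → ℝ, IsGraphon g ∧ IsGraphon g' ∧
      edgeDensity g = ε₀ ∧ edgeDensity g' = ε₀ ∧
      triDensity g = τ₀ ∧ triDensity g' = τ₀ ∧
      ¬ GraphonEquiv g g' := by
  obtain ⟨G, hG, rfl, rfl, c, hc, hGc⟩ := exists_isGraphon_le_mul_one_sub_of_mem_interior h
  exact exists_not_graphonEquiv_of_le_mul_one_sub hG hc hGc
end
end
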